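/- arXiv:2010.09589 — 3 statements merged into one kernel-verified Lean document; each statement's English description precedes it below -/
import Mathlib

section
/- Let (Ω, P) be a probability space and let η_j, η_k : Ω → ℝ be random variables (not necessarily independent), each of whose law is the standard Gaussian measure gaussianReal 0 1. Let μ_j, μ_k, ψ be real numbers with 0 ≤ ψ ≤ min{|μ_j|, |μ_k|}, and set T_j = μ_j + η_j, T_k = μ_k + η_k. Then the covariance of the indicator functions of the events {|T_j| ≥ ψ} and {|T_k| ≥ ψ} satisfies |Cov(1_{|T_j| ≥ ψ}, 1_{|T_k| ≥ ψ})| ≤ 4·exp(−(min{|μ_j|, |μ_k|} − ψ)²/2). -/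
open MeasureTheory ProbabilityTheory

lemma gauss_tail_right (t : ℝ) (ht : 0 ≤ t) :
    gaussianReal 0 1 {x | t ≤ x} ≤ ENNReal.ofReal (Real.exp (-t ^ 2 / 2)) := by
  have h1 : (1 : NNReal) ≠ 0 := one_ne_zero
  rw [gaussianReal_apply 0 h1]
  have hle : ∫⁻ x in {x | t ≤ x}, gaussianPDF 0 1 x ≤
      ∫⁻ x in {x | t ≤ x}, ENNReal.ofReal (Real.exp (-t ^ 2 / 2)) * gaussianPDF t 1 x := by
    refine setLIntegral_mono ((measurable_gaussianPDF t 1).const_mul _) ?_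
    intro x hx
    simp only [Set.mem_setOf_eq] at hx
    rw [gaussianPDF, gaussianPDF, ← ENNReal.ofReal_mul (Real.exp_nonneg _)]
    apply ENNReal.ofReal_le_ofReal
    rw [gaussianPDFReal, gaussianPDFReal]
    simp only [NNReal.coe_one, mul_one, sub_zero]
    rw [mul_comm (Real.exp (-t ^ 2 / 2)), mul_assoc, ← Real.exp_add]
    apply mul_le_mul_of_nonneg_left _ (by positivity)
    apply Real.exp_le_exp.2
    nlinarith [mul_nonneg ht (sub_nonneg.2 hx)]
  refine hle.trans ?_
  rw [lintegral_const_mul _ (measurable_gaussianPDF t 1), ← gaussianReal_apply t h1]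
  calc ENNReal.ofReal (Real.exp (-t ^ 2 / 2)) * gaussianReal t 1 {x | t ≤ x}
      ≤ ENNReal.ofReal (Real.exp (-t ^ 2 / 2)) * 1 := by
        gcongr; exact prob_le_one
    _ = _ := mul_one _

lemma gauss_tail_abs (t : ℝ) (ht : 0 ≤ t) :
    gaussianReal 0 1 {x | t ≤ |x|} ≤ ENNReal.ofReal (2 * Real.exp (-t ^ 2 / 2)) := by
  have hsub : {x : ℝ | t ≤ |x|} ⊆ {x | t ≤ x} ∪ {x | x ≤ -t} := by
    intro x hx
    simp only [Set.mem_setOf_eq, Set.mem_union] at *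
    rcases abs_cases x with ⟨h, _⟩ | ⟨h, _⟩
    · left; linarith
    · right; linarith
  have hneg : gaussianReal 0 1 {x : ℝ | x ≤ -t} = gaussianReal 0 1 {x | t ≤ x} := by
    have hv1 : (⟨(-1 : ℝ) ^ 2, sq_nonneg _⟩ : NNReal) = 1 := by ext; norm_num
    have hmap : (gaussianReal 0 1).map (((-1 : ℝ)) * ·) = gaussianReal 0 1 := by
      rw [gaussianReal_map_const_mul]
      congr 1
      · norm_num
      ext; norm_num
    conv_rhs => rw [← hmap]
    rw [Measure.map_apply (measurable_const_mul (-1 : ℝ))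
      (show MeasurableSet {x : ℝ | t ≤ x} from measurableSet_Ici)]
    congr 1
    ext x
    simp only [Set.mem_preimage, Set.mem_setOf_eq, Set.mem_Ici]
    constructor <;> intro h <;> linarith
  calc gaussianReal 0 1 {x | t ≤ |x|}
      ≤ gaussianReal 0 1 ({x | t ≤ x} ∪ {x | x ≤ -t}) := measure_mono hsub
    _ ≤ gaussianReal 0 1 {x | t ≤ x} + gaussianReal 0 1 {x | x ≤ -t} := measure_union_le _ _
    _ ≤ ENNReal.ofReal (Real.exp (-t ^ 2 / 2)) + ENNReal.ofReal (Real.exp (-t ^ 2 / 2)) := by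
        rw [hneg]; exact add_le_add (gauss_tail_right t ht) (gauss_tail_right t ht)
    _ = ENNReal.ofReal (2 * Real.exp (-t ^ 2 / 2)) := by
        rw [← ENNReal.ofReal_add (Real.exp_nonneg _) (Real.exp_nonneg _)]; ring_nf

/-- If `η` is standard Gaussian under `P` and `ψ ≤ |μ|`, then
`P {|μ + η| < ψ} ≤ 2 exp(-(|μ|-ψ)²/2)`. -/
lemma compl_event_bound {Ω : Type*} [MeasurableSpace Ω] (P : Measure Ω)
    [IsProbabilityMeasure P] (η : Ω → ℝ) (hη : Measurable η)
    (hlaw : P.map η = gaussianReal 0 1) (μ ψ : ℝ) (hψ : 0 ≤ ψ) (hψμ : ψ ≤ |μ|) :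
    P {ω | ψ ≤ |μ + η ω|}ᶜ ≤ ENNReal.ofReal (2 * Real.exp (-(|μ| - ψ) ^ 2 / 2)) := by
  have hsub : {ω | ψ ≤ |μ + η ω|}ᶜ ⊆ {ω | |μ| - ψ ≤ |η ω|} := by
    intro ω hω
    simp only [Set.mem_compl_iff, Set.mem_setOf_eq, not_le] at hω
    simp only [Set.mem_setOf_eq]
    have : |μ| ≤ |μ + η ω| + |η ω| := by
      calc |μ| = |(μ + η ω) + (-η ω)| := by ring_nf
        _ ≤ |μ + η ω| + |(-η ω)| := abs_add_le _ _
        _ = |μ + η ω| + |η ω| := by rw [abs_neg]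
    linarith
  calc P {ω | ψ ≤ |μ + η ω|}ᶜ ≤ P {ω | |μ| - ψ ≤ |η ω|} := measure_mono hsub
    _ = (P.map η) {x | |μ| - ψ ≤ |x|} := by
        rw [Measure.map_apply hη]
        · rfl
        · exact measurable_abs measurableSet_Ici
    _ = gaussianReal 0 1 {x | |μ| - ψ ≤ |x|} := by rw [hlaw]
    _ ≤ ENNReal.ofReal (2 * Real.exp (-(|μ| - ψ) ^ 2 / 2)) :=
        gauss_tail_abs _ (by linarith)

/-- Let `η_j, η_k` be (possibly dependent) standard Gaussian random variables,
`T_j = μ_j + η_j`, `T_k = μ_k + η_k`, and `0 ≤ ψ ≤ min{|μ_j|, |μ_k|}`. Then the covariance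
of the indicators of the events `{|T_j| ≥ ψ}` and `{|T_k| ≥ ψ}` is at most
`4·exp(−(min{|μ_j|, |μ_k|} − ψ)²/2)` in absolute value. -/
theorem abs_cov_indicator_rejections_le {Ω : Type*} [MeasurableSpace Ω] (P : Measure Ω)
    [IsProbabilityMeasure P] (ηj ηk : Ω → ℝ) (hηj : Measurable ηj) (hηk : Measurable ηk)
    (hlawj : P.map ηj = gaussianReal 0 1) (hlawk : P.map ηk = gaussianReal 0 1)
    (μj μk ψ : ℝ) (hψ : 0 ≤ ψ) (hψμ : ψ ≤ min |μj| |μk|) :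
    |(P ({ω | ψ ≤ |μj + ηj ω|} ∩ {ω | ψ ≤ |μk + ηk ω|})).toReal
        - (P {ω | ψ ≤ |μj + ηj ω|}).toReal * (P {ω | ψ ≤ |μk + ηk ω|}).toReal|
      ≤ 4 * Real.exp (-(min |μj| |μk| - ψ) ^ 2 / 2) := by
  set A : Set Ω := {ω | ψ ≤ |μj + ηj ω|} with hA
  set B : Set Ω := {ω | ψ ≤ |μk + ηk ω|} with hB
  have hAm : MeasurableSet A := measurableSet_le measurable_const (by fun_prop)
  have hBm : MeasurableSet B := measurableSet_le measurable_const (by fun_prop)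
  set m : ℝ := min |μj| |μk| with hm
  -- bound on P Aᶜ
  have hAc : (P Aᶜ).toReal ≤ 2 * Real.exp (-(m - ψ) ^ 2 / 2) := by
    have h1 : P Aᶜ ≤ ENNReal.ofReal (2 * Real.exp (-(|μj| - ψ) ^ 2 / 2)) :=
      compl_event_bound P ηj hηj hlawj μj ψ hψ (hψμ.trans (min_le_left _ _))
    have h2 : 2 * Real.exp (-(|μj| - ψ) ^ 2 / 2) ≤ 2 * Real.exp (-(m - ψ) ^ 2 / 2) := by
      gcongr 2 * Real.exp ?_
      have hm1 : m ≤ |μj| := min_le_left _ _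
      have hm2 : 0 ≤ m - ψ := by linarith [hψμ]
      nlinarith
    calc (P Aᶜ).toReal ≤ (ENNReal.ofReal (2 * Real.exp (-(|μj| - ψ) ^ 2 / 2))).toReal :=
          ENNReal.toReal_mono ENNReal.ofReal_ne_top h1
      _ = 2 * Real.exp (-(|μj| - ψ) ^ 2 / 2) := ENNReal.toReal_ofReal (by positivity)
      _ ≤ _ := h2
  -- real-number manipulation
  set a : ℝ := (P A).toReal
  set b : ℝ := (P B).toReal
  set c : ℝ := (P (A ∩ B)).toReal
  set d : ℝ := (P Aᶜ).toReal
  have had : a + d = 1 := by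
    have h := measure_add_measure_compl (μ := P) hAm
    have h2 : (P A + P Aᶜ).toReal = 1 := by rw [h, measure_univ]; simp
    rwa [ENNReal.toReal_add (measure_ne_top _ _) (measure_ne_top _ _)] at h2
  have hcb : c ≤ b := ENNReal.toReal_mono (measure_ne_top _ _)
    (measure_mono Set.inter_subset_right)
  have hbcd : b ≤ c + d := by
    have hsub : B ⊆ (A ∩ B) ∪ Aᶜ := by
      intro ω hω
      by_cases h : ω ∈ A
      · exact Or.inl ⟨h, hω⟩
      · exact Or.inr h
    have : P B ≤ P (A ∩ B) + P Aᶜ := (measure_mono hsub).trans (measure_union_le _ _)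
    calc b ≤ (P (A ∩ B) + P Aᶜ).toReal := ENNReal.toReal_mono
            (by simp [measure_ne_top]) this
      _ = c + d := ENNReal.toReal_add (measure_ne_top _ _) (measure_ne_top _ _)
  have ha0 : 0 ≤ a := ENNReal.toReal_nonneg
  have hb0 : 0 ≤ b := ENNReal.toReal_nonneg
  have hb1 : b ≤ 1 := by
    simpa using ENNReal.toReal_mono ENNReal.one_ne_top (prob_le_one (μ := P) (s := B))
  have hd0 : 0 ≤ d := ENNReal.toReal_nonneg
  have key : |c - a * b| ≤ d := by
    rw [abs_le]
    constructor
    · nlinarith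
    · nlinarith
  calc |c - a * b| ≤ d := key
    _ ≤ 2 * Real.exp (-(m - ψ) ^ 2 / 2) := hAc
    _ ≤ 4 * Real.exp (-(m - ψ) ^ 2 / 2) := by
        have := Real.exp_pos (-(m - ψ) ^ 2 / 2)
        linarith
end

section
/- For every a > 0 and every real m ≥ 1, the Gamma distribution with shape a and rate 1/2 satisfies (gammaReal a (1/2)) {x : x > 8·log m} ≤ 2^a / m². -/
open MeasureTheory ProbabilityTheory

/-- The Gamma probability measure on `ℝ` with shape `a` and rate `r`. -/
noncomputable def gammaReal (a r : ℝ) : Measure ℝ := gammaMeasure a r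

/-- Gamma tail bound: for `a > 0` and real `m ≥ 1`,
`(gammaReal a (1/2)) {x : x > 8·log m} ≤ 2^a / m²`. -/
theorem gammaReal_tail_le (a : ℝ) (ha : 0 < a) (m : ℝ) (hm : 1 ≤ m) :
    gammaReal a (1 / 2) {x : ℝ | 8 * Real.log m < x}
      ≤ ENNReal.ofReal ((2 : ℝ) ^ a / m ^ 2) := by
  have hm0 : (0 : ℝ) < m := lt_of_lt_of_le one_pos hm
  have hlog : 0 ≤ Real.log m := Real.log_nonneg hm
  set t : ℝ := 8 * Real.log m with ht
  have ht0 : 0 ≤ t := by positivity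
  set S : Set ℝ := {x : ℝ | t < x}
  have hS : MeasurableSet S := measurableSet_Ioi
  have hGamma : 0 < Real.Gamma a := Real.Gamma_pos_of_pos ha
  have key : ∀ x ∈ S, gammaPDF a (1/2) x ≤
      ENNReal.ofReal ((2:ℝ)^a / m^2) * gammaPDF a (1/4) x := by
    intro x hx
    have hxt : t < x := hx
    have hx0 : 0 ≤ x := le_trans ht0 hxt.le
    rw [gammaPDF_of_nonneg hx0, gammaPDF_of_nonneg hx0,
      ← ENNReal.ofReal_mul (by positivity)]
    apply ENNReal.ofReal_le_ofReal
    have hexp : Real.exp (-((1/2) * x)) ≤ Real.exp (-((1/4) * x)) / m^2 := by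
      have h2 : Real.exp (-(x/4)) ≤ 1 / m^2 := by
        have h3 : Real.exp (-(x/4)) ≤ Real.exp (-(2 * Real.log m)) := by
          apply Real.exp_le_exp.mpr; nlinarith
        refine h3.trans (le_of_eq ?_)
        rw [Real.exp_neg, two_mul, Real.exp_add, Real.exp_log hm0, sq, one_div]
      calc Real.exp (-((1/2)*x)) = Real.exp (-((1/4)*x)) * Real.exp (-(x/4)) := by
            rw [← Real.exp_add]; ring_nf
        _ ≤ Real.exp (-((1/4)*x)) * (1 / m^2) :=
            mul_le_mul_of_nonneg_left h2 (Real.exp_pos _).le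
        _ = Real.exp (-((1/4)*x)) / m^2 := by ring
    have hcoef : (2:ℝ)^a * ((1/4:ℝ)^a / Real.Gamma a) = (1/2:ℝ)^a / Real.Gamma a := by
      rw [mul_div_assoc', ← Real.mul_rpow (by norm_num) (by norm_num)]
      norm_num
    calc (1/2:ℝ)^a / Real.Gamma a * x^(a-1) * Real.exp (-((1/2)*x))
        ≤ (1/2:ℝ)^a / Real.Gamma a * x^(a-1) * (Real.exp (-((1/4)*x)) / m^2) := by
          gcongr
      _ = (2:ℝ)^a / m^2 * ((1/4:ℝ)^a / Real.Gamma a * x^(a-1) * Real.exp (-((1/4)*x))) := by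
          rw [← hcoef]; ring
  have hprob : IsProbabilityMeasure (gammaMeasure a (1/4)) :=
    isProbabilityMeasure_gammaMeasure ha (by norm_num)
  calc gammaReal a (1/2) S = ∫⁻ x in S, gammaPDF a (1/2) x := by
        rw [gammaReal, gammaMeasure, withDensity_apply _ hS]
    _ ≤ ∫⁻ x in S, ENNReal.ofReal ((2:ℝ)^a / m^2) * gammaPDF a (1/4) x :=
        setLIntegral_mono ((measurable_const.mul
          ((ProbabilityTheory.measurable_gammaPDFReal a (1/4)).ennreal_ofReal))) key
    _ = ENNReal.ofReal ((2:ℝ)^a / m^2) * ∫⁻ x in S, gammaPDF a (1/4) x := lintegral_const_mul _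
        ((ProbabilityTheory.measurable_gammaPDFReal a (1/4)).ennreal_ofReal)
    _ ≤ ENNReal.ofReal ((2:ℝ)^a / m^2) * gammaMeasure a (1/4) Set.univ := by
        gcongr
        rw [gammaMeasure, withDensity_apply _ MeasurableSet.univ, Measure.restrict_univ]
        exact setLIntegral_le_lintegral _ _
    _ = ENNReal.ofReal ((2:ℝ)^a / m^2) := by rw [measure_univ, mul_one]
end

section
/- Let (Ω, P) be a probability space, let m ≥ 1, and let p_1, …, p_m and q_1, …, q_m be real-valued random variables such that the law of each p_j is the uniform distribution on [0, 1]. Then for every t ∈ ℝ and ε > 0, (1/m)·E| Σ_{j=1}^m ( 1_{p_j ≤ t} − 1_{q_j ≤ t} ) | ≤ 2ε + 2·P( max_{1 ≤ j ≤ m} |p_j − q_j| > ε ). -/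
open MeasureTheory

/-- If each `p_j` is uniformly distributed on `[0,1]`, then for any `t` and `ε > 0`,
`(1/m)·E|Σ_j (1_{p_j ≤ t} − 1_{q_j ≤ t})| ≤ 2ε + 2·P(max_j |p_j − q_j| > ε)`. -/
theorem expectation_abs_sum_indicator_diff_le {Ω : Type*} [MeasurableSpace Ω]
    (P : Measure Ω) [IsProbabilityMeasure P] (m : ℕ) (hm : 1 ≤ m)
    (p q : Fin m → Ω → ℝ) (hp : ∀ j, Measurable (p j)) (hq : ∀ j, Measurable (q j))
    (hlaw : ∀ j, P.map (p j) = volume.restrict (Set.Icc (0 : ℝ) 1))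
    (t : ℝ) (ε : ℝ) (hε : 0 < ε) :
    (1 / (m : ℝ)) * ∫ ω, |∑ j, ((if p j ω ≤ t then (1 : ℝ) else 0)
        - (if q j ω ≤ t then (1 : ℝ) else 0))| ∂P
      ≤ 2 * ε + 2 * (P {ω | ε < Finset.univ.sup'
          (Finset.univ_nonempty_iff.mpr ⟨⟨0, by omega⟩⟩)
          fun j => |p j ω - q j ω|}).toReal := by
  set S := {ω | ε < Finset.univ.sup'
      (Finset.univ_nonempty_iff.mpr ⟨⟨0, by omega⟩⟩)
      fun j => |p j ω - q j ω|} with hS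
  set f : Fin m → Ω → ℝ := fun j ω =>
    (if p j ω ≤ t then (1 : ℝ) else 0) - (if q j ω ≤ t then (1 : ℝ) else 0) with hf
  set A : Fin m → Set Ω := fun j => {ω | ε < |p j ω - q j ω|} with hAdef
  set B : Fin m → Set Ω := fun j => p j ⁻¹' Set.Ioc (t - ε) (t + ε) with hBdef
  have hAmeas : ∀ j, MeasurableSet (A j) := fun j =>
    measurableSet_lt measurable_const ((hp j).sub (hq j)).abs
  have hBmeas : ∀ j, MeasurableSet (B j) := fun j => (hp j) measurableSet_Ioc
  have hfmeas : ∀ j, Measurable (f j) := fun j =>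
    (Measurable.ite (measurableSet_le (hp j) measurable_const)
      measurable_const measurable_const).sub
    (Measurable.ite (measurableSet_le (hq j) measurable_const)
      measurable_const measurable_const)
  -- pointwise bound
  have hpt : ∀ j ω, |f j ω| ≤ (A j).indicator (1 : Ω → ℝ) ω + (B j).indicator 1 ω := by
    intro j ω
    have hA0 : (0:ℝ) ≤ (A j).indicator 1 ω :=
      Set.indicator_nonneg (fun _ _ => zero_le_one) ω
    have hB0 : (0:ℝ) ≤ (B j).indicator 1 ω :=
      Set.indicator_nonneg (fun _ _ => zero_le_one) ω
    by_cases h1 : p j ω ≤ t <;> by_cases h2 : q j ω ≤ t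
    · simp only [hf, h1, h2, if_true, sub_self, abs_zero]; linarith
    · have hLHS : |f j ω| = 1 := by simp [hf, h1, h2]
      rw [hLHS]
      by_cases hε' : ε < |p j ω - q j ω|
      · have : (A j).indicator (1 : Ω → ℝ) ω = 1 := Set.indicator_of_mem hε' 1
        rw [this]; linarith
      · have hab := abs_le.mp (le_of_not_gt hε')
        have h2' := not_le.mp h2
        have hmem : ω ∈ B j := ⟨by linarith [hab.2], by linarith [hab.1]⟩
        have : (B j).indicator (1 : Ω → ℝ) ω = 1 := Set.indicator_of_mem hmem 1
        rw [this]; linarith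
    · have hLHS : |f j ω| = 1 := by simp [hf, h1, h2]
      rw [hLHS]
      by_cases hε' : ε < |p j ω - q j ω|
      · have : (A j).indicator (1 : Ω → ℝ) ω = 1 := Set.indicator_of_mem hε' 1
        rw [this]; linarith
      · have hab := abs_le.mp (le_of_not_gt hε')
        have h1' := not_le.mp h1
        have hmem : ω ∈ B j := ⟨by linarith [hab.2], by linarith [hab.1]⟩
        have : (B j).indicator (1 : Ω → ℝ) ω = 1 := Set.indicator_of_mem hmem 1
        rw [this]; linarith
    · simp only [hf, h1, h2, if_false, sub_self, abs_zero]; linarith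
  have hgint : ∀ j, Integrable ((A j).indicator (1 : Ω → ℝ) + (B j).indicator 1) P :=
    fun j => ((integrable_const (1:ℝ)).indicator (hAmeas j)).add
      ((integrable_const (1:ℝ)).indicator (hBmeas j))
  have hfint : ∀ j, Integrable (fun ω => |f j ω|) P := by
    intro j
    refine Integrable.mono' (hgint j) ((hfmeas j).abs).aestronglyMeasurable ?_
    filter_upwards with ω
    rw [Real.norm_eq_abs, abs_abs]
    exact hpt j ω
  -- per-coordinate integral bound
  have key : ∀ j, ∫ ω, |f j ω| ∂P ≤ 2 * ε + (P S).toReal := by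
    intro j
    have h1 : ∫ ω, |f j ω| ∂P ≤ ∫ ω, ((A j).indicator (1 : Ω → ℝ) ω + (B j).indicator 1 ω) ∂P :=
      integral_mono (hfint j) (hgint j) (hpt j)
    have h2 : ∫ ω, ((A j).indicator (1 : Ω → ℝ) ω + (B j).indicator 1 ω) ∂P
        = (P (A j)).toReal + (P (B j)).toReal := by
      have hIA : Integrable ((A j).indicator (1 : Ω → ℝ)) P :=
        (integrable_const (1:ℝ)).indicator (hAmeas j)
      have hIB : Integrable ((B j).indicator (1 : Ω → ℝ)) P :=
        (integrable_const (1:ℝ)).indicator (hBmeas j)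
      rw [integral_add hIA hIB,
        integral_indicator_one (hAmeas j), integral_indicator_one (hBmeas j)]; rfl
    have hAS : (P (A j)).toReal ≤ (P S).toReal := by
      refine ENNReal.toReal_mono (measure_ne_top P S) (measure_mono ?_)
      intro ω hω
      exact lt_of_lt_of_le hω (Finset.le_sup' (fun k => |p k ω - q k ω|) (Finset.mem_univ j))
    have hB2 : (P (B j)).toReal ≤ 2 * ε := by
      have hmap : P (B j) = (P.map (p j)) (Set.Ioc (t - ε) (t + ε)) := by
        rw [Measure.map_apply (hp j) measurableSet_Ioc]
      have hle : P (B j) ≤ ENNReal.ofReal (2 * ε) := by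
        rw [hmap, hlaw j]
        calc (volume.restrict (Set.Icc (0:ℝ) 1)) (Set.Ioc (t - ε) (t + ε))
            ≤ volume (Set.Ioc (t - ε) (t + ε)) :=
              Measure.restrict_le_self _
          _ = ENNReal.ofReal (2 * ε) := by
              rw [Real.volume_Ioc]; ring_nf
      calc (P (B j)).toReal ≤ (ENNReal.ofReal (2 * ε)).toReal :=
            ENNReal.toReal_mono ENNReal.ofReal_ne_top hle
        _ = 2 * ε := ENNReal.toReal_ofReal (by linarith)
      -- done
    linarith [h1, h2.le, h2.ge]
  -- sum the bounds
  have hsum : ∫ ω, |∑ j, f j ω| ∂P ≤ ∑ j : Fin m, ∫ ω, |f j ω| ∂P := by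
    have hRint : Integrable (fun ω => ∑ j : Fin m, |f j ω|) P :=
      integrable_finset_sum _ (fun j _ => hfint j)
    have hLint : Integrable (fun ω => |∑ j : Fin m, f j ω|) P := by
      refine Integrable.mono' hRint ?_ ?_
      · exact (Finset.measurable_sum _ (fun j _ => hfmeas j)).abs.aestronglyMeasurable
      · filter_upwards with ω
        rw [Real.norm_eq_abs, abs_abs]
        exact Finset.abs_sum_le_sum_abs _ _
    calc ∫ ω, |∑ j, f j ω| ∂P ≤ ∫ ω, ∑ j : Fin m, |f j ω| ∂P :=
          integral_mono hLint hRint (fun ω => Finset.abs_sum_le_sum_abs _ _)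
      _ = ∑ j : Fin m, ∫ ω, |f j ω| ∂P := integral_finset_sum _ (fun j _ => hfint j)
  have hsum2 : ∑ j : Fin m, ∫ ω, |f j ω| ∂P ≤ (m : ℝ) * (2 * ε + (P S).toReal) := by
    calc ∑ j : Fin m, ∫ ω, |f j ω| ∂P ≤ ∑ _j : Fin m, (2 * ε + (P S).toReal) :=
          Finset.sum_le_sum (fun j _ => key j)
      _ = (m : ℝ) * (2 * ε + (P S).toReal) := by
          rw [Finset.sum_const, Finset.card_univ, Fintype.card_fin, nsmul_eq_mul]
  have hm0 : (0:ℝ) < (m:ℝ) := by exact_mod_cast hm.trans_lt' (by norm_num)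
  have htot : ∫ ω, |∑ j, f j ω| ∂P ≤ (m : ℝ) * (2 * ε + (P S).toReal) := hsum.trans hsum2
  have hfinal : (1 / (m : ℝ)) * ∫ ω, |∑ j, f j ω| ∂P ≤ 2 * ε + (P S).toReal := by
    rw [div_mul_eq_mul_div, one_mul, div_le_iff₀ hm0]
    linarith [htot]
  have hnn : (0:ℝ) ≤ (P S).toReal := ENNReal.toReal_nonneg
  calc (1 / (m : ℝ)) * ∫ ω, |∑ j, f j ω| ∂P ≤ 2 * ε + (P S).toReal := hfinal
    _ ≤ 2 * ε + 2 * (P S).toReal := by linarith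
end
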